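/- arXiv:2302.09940 — 3 statements merged into one kernel-verified Lean document; each statement's English description precedes it below -/
import Mathlib

section
/- Let m, n, p be finite index types, let B be a real m × n matrix and A a real n × p matrix with B * A = 0, and let L = Bᵀ * B + A * Aᵀ. Then the dimension of the kernel of the linear map x ↦ L x on ℝⁿ equals n − rank B − rank A, where n denotes the cardinality of the middle index type. -/
open Matrix Module

private lemma dotself_nonneg {n : Type*} [Fintype n] (v : n → ℝ) : 0 ≤ v ⬝ᵥ v :=
  Finset.sum_nonneg fun _ _ => mul_self_nonneg _

/-- For real boundary matrices `B` (`∂_k`) and `A` (`∂_{k+1}`) with `B * A = 0`, the kernel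
of the Hodge–Laplacian `L = Bᵀ * B + A * Aᵀ` has dimension `n − rank B − rank A`. -/
theorem hodge_laplacian_kernel_dim
    (m n p : Type*) [Fintype m] [Fintype n] [Fintype p]
    (B : Matrix m n ℝ) (A : Matrix n p ℝ) (hBA : B * A = 0) :
    Module.finrank ℝ
        (LinearMap.ker (B.transpose * B + A * A.transpose).mulVecLin)
      = Fintype.card n - B.rank - A.rank := by
  classical
  -- Step 1: ker L = ker B ⊓ ker Aᵀ
  have hkerL : LinearMap.ker (Bᵀ * B + A * Aᵀ).mulVecLin
      = LinearMap.ker B.mulVecLin ⊓ LinearMap.ker Aᵀ.mulVecLin := by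
    ext x
    simp only [LinearMap.mem_ker, Submodule.mem_inf, Matrix.mulVecLin_apply]
    have h1 : x ⬝ᵥ (Bᵀ * B) *ᵥ x = (B *ᵥ x) ⬝ᵥ (B *ᵥ x) := by
      rw [← Matrix.mulVec_mulVec, Matrix.dotProduct_mulVec, Matrix.vecMul_transpose]
    have h2 : x ⬝ᵥ (A * Aᵀ) *ᵥ x = (Aᵀ *ᵥ x) ⬝ᵥ (Aᵀ *ᵥ x) := by
      rw [← Matrix.mulVec_mulVec, Matrix.dotProduct_mulVec, ← Matrix.mulVec_transpose]
    constructor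
    · intro h
      have h' := congr_arg (dotProduct x) h
      rw [Matrix.add_mulVec, dotProduct_add, dotProduct_zero, h1, h2] at h'
      have hb : (B *ᵥ x) ⬝ᵥ (B *ᵥ x) = 0 :=
        le_antisymm (by linarith [dotself_nonneg (Aᵀ *ᵥ x)]) (dotself_nonneg _)
      have ha : (Aᵀ *ᵥ x) ⬝ᵥ (Aᵀ *ᵥ x) = 0 := by linarith
      exact ⟨dotProduct_self_eq_zero.mp hb, dotProduct_self_eq_zero.mp ha⟩
    · rintro ⟨hb, ha⟩
      rw [Matrix.add_mulVec, ← Matrix.mulVec_mulVec, hb, Matrix.mulVec_zero,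
        ← Matrix.mulVec_mulVec, ha, Matrix.mulVec_zero, add_zero]
  -- Notation
  set S : Submodule ℝ (n → ℝ) := LinearMap.ker B.mulVecLin ⊓ LinearMap.ker Aᵀ.mulVecLin with hS
  set T : Submodule ℝ (n → ℝ) := LinearMap.range A.mulVecLin with hT
  -- ker Aᵀ and range A are disjoint
  have hdisj : LinearMap.ker Aᵀ.mulVecLin ⊓ T = ⊥ := by
    rw [eq_bot_iff]
    rintro x ⟨hx1, v, rfl⟩
    simp only [Matrix.mulVecLin_apply, LinearMap.mem_ker] at hx1 ⊢
    have : (A *ᵥ v) ⬝ᵥ (A *ᵥ v) = 0 := by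
      rw [Matrix.dotProduct_mulVec, ← Matrix.mulVec_transpose]
      have hx1' : Aᵀ *ᵥ (A *ᵥ v) = 0 := hx1
      rw [hx1', zero_dotProduct]
    simpa [Submodule.mem_bot] using dotProduct_self_eq_zero.mp this
  -- S ⊓ T = ⊥
  have hST : S ⊓ T = ⊥ := by
    rw [eq_bot_iff, ← hdisj]
    exact inf_le_inf_right T inf_le_right
  -- ker Aᵀ ⊔ range A = ⊤ by dimension count
  have hdim : finrank ℝ (LinearMap.ker Aᵀ.mulVecLin ⊔ T : Submodule ℝ (n → ℝ))
      = Fintype.card n := by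
    have := Submodule.finrank_sup_add_finrank_inf_eq (LinearMap.ker Aᵀ.mulVecLin) T
    rw [hdisj, finrank_bot, add_zero] at this
    rw [this]
    have hrn := LinearMap.finrank_range_add_finrank_ker Aᵀ.mulVecLin
    rw [Module.finrank_pi] at hrn
    have hrt : finrank ℝ (LinearMap.range Aᵀ.mulVecLin) = A.rank := by
      rw [show finrank ℝ (LinearMap.range Aᵀ.mulVecLin) = Aᵀ.rank from rfl,
        Matrix.rank_transpose]
    have hTA : finrank ℝ T = A.rank := rfl
    omega
  have htop : (LinearMap.ker Aᵀ.mulVecLin ⊔ T : Submodule ℝ (n → ℝ)) = ⊤ :=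
    Submodule.eq_top_of_finrank_eq (by rw [hdim, Module.finrank_pi])
  -- range A ⊆ ker B
  have hTK : T ≤ LinearMap.ker B.mulVecLin := by
    rintro x ⟨v, rfl⟩
    simp only [Matrix.mulVecLin_apply, LinearMap.mem_ker, Matrix.mulVec_mulVec, hBA,
      Matrix.zero_mulVec]
  -- S ⊔ T = ker B
  have hsup : S ⊔ T = LinearMap.ker B.mulVecLin := by
    apply le_antisymm (sup_le (inf_le_left) hTK)
    intro x hx
    have : x ∈ (LinearMap.ker Aᵀ.mulVecLin ⊔ T : Submodule ℝ (n → ℝ)) := htop ▸ Submodule.mem_top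
    obtain ⟨u, hu, w, hw, rfl⟩ := Submodule.mem_sup.mp this
    have hu' : u ∈ S := by
      refine Submodule.mem_inf.mpr ⟨?_, hu⟩
      have : w ∈ LinearMap.ker B.mulVecLin := hTK hw
      simp only [LinearMap.mem_ker] at this hx ⊢
      rw [map_add, this, add_zero] at hx
      exact hx
    exact Submodule.add_mem_sup hu' hw
  -- dimension bookkeeping
  have hmain := Submodule.finrank_sup_add_finrank_inf_eq S T
  rw [hST, finrank_bot, add_zero, hsup] at hmain
  have hrnB := LinearMap.finrank_range_add_finrank_ker B.mulVecLin
  rw [Module.finrank_pi] at hrnB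
  have hrB : finrank ℝ (LinearMap.range B.mulVecLin) = B.rank := rfl
  have hTA : finrank ℝ T = A.rank := rfl
  rw [hkerL]
  omega
end

section
/- Let m, n, p be finite index types, let B be a real m × n matrix and A a real n × p matrix with B * A = 0, and let L = Bᵀ * B + A * Aᵀ. Since B * A = 0, the image of the linear map y ↦ A y is a subspace of the kernel of x ↦ B x. Then the dimension of the quotient space (ker of x ↦ B x) / (image of y ↦ A y) equals the dimension of the kernel of x ↦ L x. In other words, the multiplicity of the zero eigenvalue of the Hodge–Laplacian L equals the Betti number of the complex at the middle term. -/
open Matrix Module Submodule LinearMap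

set_option synthInstance.maxHeartbeats 400000 in
set_option maxHeartbeats 1000000 in
/-- For real boundary matrices `B` (`∂_k`) and `A` (`∂_{k+1}`) with `B * A = 0`, the
dimension of the homology `ker B / im A` equals the dimension of the kernel of the
Hodge–Laplacian `L = Bᵀ * B + A * Aᵀ` (the multiplicity of its zero eigenvalue). -/
theorem betti_number_eq_hodge_laplacian_kernel_dim
    (m n p : Type*) [Fintype m] [Fintype n] [Fintype p]
    (B : Matrix m n ℝ) (A : Matrix n p ℝ) (hBA : B * A = 0) :
    Module.finrank ℝ
        (↥(LinearMap.ker B.mulVecLin) ⧸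
          (LinearMap.range A.mulVecLin).comap (LinearMap.ker B.mulVecLin).subtype)
      = Module.finrank ℝ
          (LinearMap.ker (B.transpose * B + A * A.transpose).mulVecLin) := by
  classical
  -- Step 1: ker L = ker B ⊓ ker Aᵀ
  have hkerL : LinearMap.ker (Bᵀ * B + A * Aᵀ).mulVecLin
      = LinearMap.ker B.mulVecLin ⊓ LinearMap.ker Aᵀ.mulVecLin := by
    ext x
    simp only [LinearMap.mem_ker, Submodule.mem_inf, mulVecLin_apply]
    constructor
    · intro h
      have h0 : x ⬝ᵥ ((Bᵀ * B + A * Aᵀ) *ᵥ x) = 0 := by rw [h, dotProduct_zero]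
      have hsplit : x ⬝ᵥ ((Bᵀ * B + A * Aᵀ) *ᵥ x)
          = (B *ᵥ x) ⬝ᵥ (B *ᵥ x) + (Aᵀ *ᵥ x) ⬝ᵥ (Aᵀ *ᵥ x) := by
        rw [add_mulVec, dotProduct_add, ← mulVec_mulVec, ← mulVec_mulVec,
          dotProduct_mulVec x Bᵀ, vecMul_transpose, dotProduct_mulVec x A,
          ← mulVec_transpose]
      rw [hsplit] at h0
      have h1 : (B *ᵥ x) ⬝ᵥ (B *ᵥ x) = 0 ∧ (Aᵀ *ᵥ x) ⬝ᵥ (Aᵀ *ᵥ x) = 0 := by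
        have n1 : 0 ≤ (B *ᵥ x) ⬝ᵥ (B *ᵥ x) :=
          Finset.sum_nonneg fun i _ => mul_self_nonneg _
        have n2 : 0 ≤ (Aᵀ *ᵥ x) ⬝ᵥ (Aᵀ *ᵥ x) :=
          Finset.sum_nonneg fun i _ => mul_self_nonneg _
        constructor <;> linarith
      exact ⟨dotProduct_self_eq_zero.mp h1.1, dotProduct_self_eq_zero.mp h1.2⟩
    · rintro ⟨h1, h2⟩
      rw [add_mulVec, ← mulVec_mulVec, ← mulVec_mulVec, h1, h2, mulVec_zero, mulVec_zero,
        add_zero]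
  rw [hkerL]
  have hRK : LinearMap.range A.mulVecLin ≤ (LinearMap.ker B.mulVecLin) := by
    rintro _ ⟨y, rfl⟩
    simp only [LinearMap.mem_ker, mulVecLin_apply, mulVec_mulVec, hBA, zero_mulVec]
  have hAB : Aᵀ * Bᵀ = 0 := by rw [← transpose_mul, hBA, transpose_zero]
  have hBtKA : LinearMap.range Bᵀ.mulVecLin ≤ (LinearMap.ker Aᵀ.mulVecLin) := by
    rintro _ ⟨y, rfl⟩
    simp only [LinearMap.mem_ker, mulVecLin_apply, mulVec_mulVec, hAB, zero_mulVec]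
  have hdisj : (LinearMap.ker B.mulVecLin) ⊓ LinearMap.range Bᵀ.mulVecLin = ⊥ := by
    rw [eq_bot_iff]
    rintro x ⟨hx1, y, rfl⟩
    have hy : y ∈ LinearMap.ker (Bᵀᵀ * Bᵀ).mulVecLin := by
      simp only [LinearMap.mem_ker, mulVecLin_apply, transpose_transpose, ← mulVec_mulVec]
      exact hx1
    rw [Matrix.ker_mulVecLin_transpose_mul_self] at hy
    simpa [LinearMap.mem_ker] using hy
  -- rank-nullity facts
  have rnB := LinearMap.finrank_range_add_finrank_ker B.mulVecLin
  have rnAt := LinearMap.finrank_range_add_finrank_ker Aᵀ.mulVecLin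
  have hrankT : finrank ℝ (LinearMap.range Aᵀ.mulVecLin)
      = finrank ℝ (LinearMap.range A.mulVecLin) := A.rank_transpose
  have hrankBT : finrank ℝ (LinearMap.range Bᵀ.mulVecLin)
      = finrank ℝ (LinearMap.range B.mulVecLin) := B.rank_transpose
  -- (LinearMap.ker B.mulVecLin) ⊔ range Bᵀ = ⊤
  have hsup : (LinearMap.ker B.mulVecLin) ⊔ LinearMap.range Bᵀ.mulVecLin = ⊤ := by
    apply Submodule.eq_top_of_finrank_eq
    have := Submodule.finrank_sup_add_finrank_inf_eq (LinearMap.ker B.mulVecLin) (LinearMap.range Bᵀ.mulVecLin)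
    rw [hdisj, finrank_bot, add_zero] at this
    omega
  have hsup' : (LinearMap.ker B.mulVecLin) ⊔ (LinearMap.ker Aᵀ.mulVecLin) = ⊤ := top_unique (hsup ▸ sup_le_sup_left hBtKA (LinearMap.ker B.mulVecLin))
  -- the restriction of B to (LinearMap.ker Aᵀ.mulVecLin) has full range
  set g := B.mulVecLin ∘ₗ (LinearMap.ker Aᵀ.mulVecLin).subtype with hg
  have hrange_g : LinearMap.range g = LinearMap.range B.mulVecLin := by
    apply le_antisymm
    · rintro _ ⟨x, rfl⟩
      exact ⟨x, rfl⟩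
    · rintro _ ⟨u, rfl⟩
      have hu : u ∈ (LinearMap.ker B.mulVecLin) ⊔ (LinearMap.ker Aᵀ.mulVecLin) := hsup' ▸ Submodule.mem_top
      obtain ⟨c, hc, d, hd, rfl⟩ := Submodule.mem_sup.mp hu
      refine ⟨⟨d, hd⟩, ?_⟩
      have hc0 : B.mulVecLin c = 0 := hc
      simp [hg, map_add, hc0]
  have hker_g : LinearMap.ker g = ((LinearMap.ker B.mulVecLin) ⊓ (LinearMap.ker Aᵀ.mulVecLin)).comap (LinearMap.ker Aᵀ.mulVecLin).subtype := by
    rw [hg, LinearMap.ker_comp]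
    ext x
    simp only [Submodule.mem_comap, Submodule.mem_inf, Submodule.subtype_apply]
    exact ⟨fun h => ⟨h, x.2⟩, fun h => h.1⟩
  have hker_g' : finrank ℝ (LinearMap.ker g) = finrank ℝ ↥((LinearMap.ker B.mulVecLin) ⊓ (LinearMap.ker Aᵀ.mulVecLin)) := by
    rw [hker_g]
    exact (Submodule.comapSubtypeEquivOfLe inf_le_right).finrank_eq
  have rng := LinearMap.finrank_range_add_finrank_ker g
  rw [hrange_g, hker_g'] at rng
  -- quotient dimension
  have hq := Submodule.finrank_quotient_add_finrank
    ((LinearMap.range A.mulVecLin).comap (LinearMap.ker B.mulVecLin).subtype)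
  have hcomap : finrank ℝ ((LinearMap.range A.mulVecLin).comap (LinearMap.ker B.mulVecLin).subtype)
      = finrank ℝ (LinearMap.range A.mulVecLin) :=
    (Submodule.comapSubtypeEquivOfLe hRK).finrank_eq
  rw [hcomap] at hq
  omega
end

section
/- Let G be a simple graph on a finite vertex type V. The rank over the two-element field ZMod 2 of the unoriented incidence matrix of G equals the cardinality of V minus the number of connected components of G. In particular, if G is connected the rank is |V| − 1. -/
open Matrix

open Classical in
/-- The rank over `𝔽₂ = ZMod 2` of the unoriented incidence matrix of a simple graph `G`
on a finite vertex type `V` equals `|V|` minus the number of connected components of `G`.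
In particular, if `G` is connected the rank is `|V| − 1`. -/
theorem incMatrix_rank_eq
    (V : Type*) [Fintype V] [DecidableEq V] (G : SimpleGraph V) :
    (G.incMatrix (ZMod 2)).rank
        = Fintype.card V - Nat.card G.ConnectedComponent ∧
      (G.Connected → (G.incMatrix (ZMod 2)).rank = Fintype.card V - 1) := by
  classical
  have : Fintype G.ConnectedComponent := Fintype.ofFinite _
  set F : Type := ZMod 2 with hF
  set M : Matrix V (Sym2 V) F := G.incMatrix F with hM
  -- Key: for an edge `s(u,w)`, the corresponding entry of `Mᵀ.mulVec x` is `x u + x w`.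
  have key : ∀ (x : V → F) {u w : V}, G.Adj u w →
      Mᵀ.mulVec x s(u, w) = x u + x w := by
    intro x u w huw
    have hne : u ≠ w := huw.ne
    have h1 : Mᵀ.mulVec x s(u, w) = ∑ v, M v s(u, w) * x v := by
      simp [Matrix.mulVec, dotProduct, Matrix.transpose_apply]
    rw [h1, ← Finset.sum_subset (Finset.subset_univ ({u, w} : Finset V))]
    · rw [Finset.sum_pair hne, hM,
        SimpleGraph.incMatrix_of_mem_incidenceSet _
          ((G.mk'_mem_incidenceSet_left_iff).2 huw),
        SimpleGraph.incMatrix_of_mem_incidenceSet _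
          ((G.mk'_mem_incidenceSet_right_iff).2 huw),
        one_mul, one_mul]
    · intro v _ hv
      simp only [Finset.mem_insert, Finset.mem_singleton, not_or] at hv
      rw [hM, SimpleGraph.incMatrix_of_notMem_incidenceSet, zero_mul]
      rw [SimpleGraph.mk'_mem_incidenceSet_iff]
      rintro ⟨_, rfl | rfl⟩ <;> simp_all
  -- The map sending a function on components to a function on vertices.
  let L : (G.ConnectedComponent → F) →ₗ[F] (V → F) :=
    { toFun := fun c v => c (G.connectedComponentMk v)
      map_add' := by intros; rfl
      map_smul' := by intros; rfl }
  have hLinj : Function.Injective L := by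
    intro c c' h
    funext cc
    obtain ⟨v, rfl⟩ := cc.exists_rep
    exact congrFun h v
  have hrange : LinearMap.range L = LinearMap.ker Mᵀ.mulVecLin := by
    ext x
    constructor
    · rintro ⟨c, rfl⟩
      rw [LinearMap.mem_ker]
      funext e
      induction e using Sym2.inductionOn with
      | hf u w =>
        rw [Matrix.mulVecLin_apply]
        by_cases huw : G.Adj u w
        · rw [key _ huw]
          show c (G.connectedComponentMk u) + c (G.connectedComponentMk w) = 0
          rw [SimpleGraph.ConnectedComponent.connectedComponentMk_eq_of_adj huw]
          exact CharTwo.add_self_eq_zero _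
        · have h2 : ∀ (y : V → F), Mᵀ.mulVec y s(u, w) = ∑ v, M v s(u, w) * y v :=
            fun y => by simp [Matrix.mulVec, dotProduct, Matrix.transpose_apply]
          rw [h2]
          refine Finset.sum_eq_zero fun v _ => ?_
          rw [hM, SimpleGraph.incMatrix_of_notMem_incidenceSet, zero_mul]
          rw [SimpleGraph.mk'_mem_incidenceSet_iff]
          rintro ⟨h, _⟩
          exact huw h
    · intro hx
      have hadj : ∀ v w : V, G.Adj v w → x v = x w := by
        intro v w hvw
        have h0 := congrFun (LinearMap.mem_ker.mp hx) s(v, w)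
        rw [Matrix.mulVecLin_apply, key x hvw, Pi.zero_apply] at h0
        have h1 : x v = -(x w) := eq_neg_of_add_eq_zero_left h0
        rwa [CharTwo.neg_eq] at h1
      have hconst : ∀ {v w : V} (p : G.Walk v w), x v = x w := by
        intro v w p
        induction p with
        | nil => rfl
        | cons ha _ ih => exact (hadj _ _ ha).trans ih
      refine ⟨SimpleGraph.ConnectedComponent.lift x
        (fun v w p _ => hconst p), ?_⟩
      funext v
      rfl
  -- Rank-nullity for `Mᵀ`.
  have hker : Module.finrank F ↥(LinearMap.ker Mᵀ.mulVecLin)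
      = Fintype.card G.ConnectedComponent := by
    rw [← hrange, LinearMap.finrank_range_of_inj hLinj, Module.finrank_pi]
  have hrn := LinearMap.finrank_range_add_finrank_ker (Mᵀ.mulVecLin)
  rw [hker, Module.finrank_pi] at hrn
  have hrankT : Mᵀ.rank + Fintype.card G.ConnectedComponent = Fintype.card V := hrn
  have hrank : M.rank = Fintype.card V - Nat.card G.ConnectedComponent := by
    rw [← Matrix.rank_transpose, Nat.card_eq_fintype_card]
    omega
  refine ⟨hrank, fun hconn => ?_⟩
  have h1 : Nat.card G.ConnectedComponent = 1 := by
    rw [Nat.card_eq_one_iff_unique]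
    constructor
    · constructor
      intro a b
      obtain ⟨v, rfl⟩ := a.exists_rep
      obtain ⟨w, rfl⟩ := b.exists_rep
      exact SimpleGraph.ConnectedComponent.sound (hconn.preconnected v w)
    · exact ⟨G.connectedComponentMk hconn.nonempty.some⟩
  rw [hrank, h1]
end
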